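/- arXiv:1504.07914 — 5 statements merged into one kernel-verified Lean document; each statement's English description precedes it below -/
import Mathlib

section
/- For every integer k ≥ 1, the identity 2·∑_{l=0}^{k-2} s^{k-1-l}·h_l(s)^2 + h_{k-1}(s)^2 = ∑_{l=1}^{k} (l^2 + (k-l)^2·s^k)·s^{l-1} holds as polynomials in s, where h_l(s) = ∑_{r=0}^{l} s^r. -/
open Finset

/-- Closed form for `∑ (l+1)² s^l` times `(s-1)³`. -/
lemma aux_A (s : ℂ) (n : ℕ) :
    (∑ l ∈ range n, ((l : ℂ) + 1) ^ 2 * s ^ l) * (s - 1) ^ 3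
      = -1 - s + ((n : ℂ) + 1) ^ 2 * s ^ n - (2 * (n : ℂ) ^ 2 + 2 * (n : ℂ) - 1) * s ^ (n + 1)
        + (n : ℂ) ^ 2 * s ^ (n + 2) := by
  induction n with
  | zero => simp; ring
  | succ n ih =>
    rw [Finset.sum_range_succ, add_mul, ih]
    push_cast
    ring

/-- Closed form for `∑ (n-1-l)² s^l` times `(s-1)³`. -/
lemma aux_D (s : ℂ) (n : ℕ) :
    (∑ l ∈ range n, ((n - 1 - l : ℕ) : ℂ) ^ 2 * s ^ l) * (s - 1) ^ 3
      = s ^ (n + 1) + s ^ n - (n : ℂ) ^ 2 * s ^ 2 + (2 * (n : ℂ) ^ 2 - 2 * (n : ℂ) - 1) * s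
        - ((n : ℂ) - 1) ^ 2 := by
  induction n with
  | zero => simp
  | succ n ih =>
    have h1 : (∑ l ∈ range (n + 1), ((n + 1 - 1 - l : ℕ) : ℂ) ^ 2 * s ^ l)
        = (∑ l ∈ range n, ((n - 1 - l : ℕ) : ℂ) ^ 2 * s ^ l) * s + (n : ℂ) ^ 2 := by
      rw [Finset.sum_range_succ', Finset.sum_mul]
      congr 1
      · refine Finset.sum_congr rfl fun i hi => ?_
        rw [show n + 1 - 1 - (i + 1) = n - 1 - i from by omega]
        ring
      · simp
    rw [h1, add_mul, mul_right_comm, ih]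
    push_cast
    ring

/-- For every integer `k ≥ 1`,
`2·∑_{l=0}^{k-2} s^{k-1-l}·h_l(s)² + h_{k-1}(s)² = ∑_{l=1}^{k} (l² + (k-l)²·s^k)·s^{l-1}`,
where `h_l(s) = ∑_{r=0}^{l} s^r`. -/
theorem stmt_1 (k : ℕ) (hk : 1 ≤ k) (s : ℂ) :
    2 * ∑ l ∈ Finset.range (k - 1),
        s ^ (k - 1 - l) * (∑ r ∈ Finset.range (l + 1), s ^ r) ^ 2
      + (∑ r ∈ Finset.range (k - 1 + 1), s ^ r) ^ 2
    = ∑ l ∈ Finset.Icc 1 k, ((l : ℂ) ^ 2 + ((k - l : ℕ) : ℂ) ^ 2 * s ^ k) * s ^ (l - 1) := by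
  obtain ⟨m, rfl⟩ : ∃ m, k = m + 1 := ⟨k - 1, by omega⟩
  simp only [Nat.add_sub_cancel]
  -- reindex the right-hand side
  have hR : ∑ l ∈ Finset.Icc 1 (m + 1),
        ((l : ℂ) ^ 2 + ((m + 1 - l : ℕ) : ℂ) ^ 2 * s ^ (m + 1)) * s ^ (l - 1)
      = (∑ i ∈ range (m + 1), ((i : ℂ) + 1) ^ 2 * s ^ i)
        + s ^ (m + 1) * ∑ i ∈ range (m + 1), ((m + 1 - 1 - i : ℕ) : ℂ) ^ 2 * s ^ i := by
    rw [← Finset.Ico_add_one_right_eq_Icc, Finset.sum_Ico_eq_sum_range]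
    simp only [Nat.succ_sub_one]
    rw [Finset.mul_sum, ← Finset.sum_add_distrib]
    refine Finset.sum_congr rfl fun i hi => ?_
    rw [show 1 + i - 1 = i from by omega, show m + 1 - (1 + i) = m + 1 - 1 - i from by omega]
    push_cast
    ring
  rw [hR]
  by_cases hs : s = 1
  · subst hs
    simp only [one_pow, Finset.sum_const, Finset.card_range, nsmul_eq_mul, mul_one, one_mul]
    -- now a pure counting identity
    have key : (2 * ∑ l ∈ range m, (l + 1) ^ 2 + (m + 1) ^ 2 : ℕ)
        = (∑ i ∈ range (m + 1), (i + 1) ^ 2) + ∑ i ∈ range (m + 1), (m + 1 - 1 - i) ^ 2 := by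
      have e1 : ∑ i ∈ range (m + 1), (m + 1 - 1 - i) ^ 2 = ∑ i ∈ range (m + 1), i ^ 2 :=
        Finset.sum_range_reflect (fun i => i ^ 2) (m + 1)
      have e2 : ∑ i ∈ range (m + 1), i ^ 2 = ∑ i ∈ range m, (i + 1) ^ 2 := by
        rw [Finset.sum_range_succ']
        simp
      rw [e1, e2, Finset.sum_range_succ]
      ring
    have := congrArg (Nat.cast : ℕ → ℂ) key
    push_cast at this ⊢
    linear_combination this
  · have h1 : s - 1 ≠ 0 := sub_ne_zero.mpr hs
    apply mul_right_cancel₀ (pow_ne_zero 3 h1)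
    have geom : ∀ n : ℕ, (∑ r ∈ range n, s ^ r) * (s - 1) = s ^ n - 1 := fun n =>
      geom_sum_mul s n
    have hS : (∑ l ∈ range m, s ^ (m - l) * (∑ r ∈ range (l + 1), s ^ r) ^ 2) * (s - 1) ^ 2
        = s ^ (m + 2) * (∑ l ∈ range m, s ^ l) + s * (∑ l ∈ range m, s ^ l)
          - 2 * (m : ℂ) * s ^ (m + 1) := by
      rw [Finset.sum_mul]
      have step : ∀ l ∈ range m,
          s ^ (m - l) * (∑ r ∈ range (l + 1), s ^ r) ^ 2 * (s - 1) ^ 2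
            = s ^ (m + 2) * s ^ l - 2 * s ^ (m + 1) + s ^ (m - l) := by
        intro l hl
        have hlm : l < m := Finset.mem_range.mp hl
        have p1 : s ^ (m - l) * s ^ (l + 1) = s ^ (m + 1) := by
          rw [← pow_add]
          congr 1
          omega
        have p2 : s ^ (m + 1) * s ^ (l + 1) = s ^ (m + 2) * s ^ l := by
          rw [← pow_add, ← pow_add]
          congr 1
          omega
        calc s ^ (m - l) * (∑ r ∈ range (l + 1), s ^ r) ^ 2 * (s - 1) ^ 2
            = s ^ (m - l) * ((∑ r ∈ range (l + 1), s ^ r) * (s - 1)) ^ 2 := by ring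
          _ = s ^ (m - l) * (s ^ (l + 1) - 1) ^ 2 := by rw [geom]
          _ = s ^ (m - l) * s ^ (l + 1) * s ^ (l + 1)
              - 2 * (s ^ (m - l) * s ^ (l + 1)) + s ^ (m - l) := by ring
          _ = s ^ (m + 2) * s ^ l - 2 * s ^ (m + 1) + s ^ (m - l) := by rw [p1, p2]
      rw [Finset.sum_congr rfl step]
      have e3 : ∑ l ∈ range m, s ^ (m - l) = ∑ l ∈ range m, s ^ (l + 1) := by
        rw [← Finset.sum_range_reflect (fun j => s ^ (j + 1)) m]
        refine Finset.sum_congr rfl fun l hl => ?_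
        have : l < m := Finset.mem_range.mp hl
        congr 1
        omega
      simp only [Finset.sum_add_distrib, Finset.sum_sub_distrib, ← Finset.mul_sum,
        Finset.sum_const, Finset.card_range, nsmul_eq_mul, e3]
      have e4 : ∑ l ∈ range m, s ^ (l + 1) = s * ∑ l ∈ range m, s ^ l := by
        rw [Finset.mul_sum]
        exact Finset.sum_congr rfl fun l _ => by ring
      rw [e4]
      ring
    calc (2 * (∑ l ∈ range m, s ^ (m - l) * (∑ r ∈ range (l + 1), s ^ r) ^ 2)
          + (∑ r ∈ range (m + 1), s ^ r) ^ 2) * (s - 1) ^ 3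
        = 2 * ((∑ l ∈ range m, s ^ (m - l) * (∑ r ∈ range (l + 1), s ^ r) ^ 2) * (s - 1) ^ 2)
            * (s - 1) + ((∑ r ∈ range (m + 1), s ^ r) * (s - 1)) ^ 2 * (s - 1) := by ring
      _ = 2 * (s ^ (m + 2) * (∑ l ∈ range m, s ^ l) + s * (∑ l ∈ range m, s ^ l)
            - 2 * (m : ℂ) * s ^ (m + 1)) * (s - 1) + (s ^ (m + 1) - 1) ^ 2 * (s - 1) := by
          rw [hS, geom]
      _ = 2 * (s ^ (m + 2) + s) * ((∑ l ∈ range m, s ^ l) * (s - 1))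
            - 4 * (m : ℂ) * s ^ (m + 1) * (s - 1) + (s ^ (m + 1) - 1) ^ 2 * (s - 1) := by ring
      _ = 2 * (s ^ (m + 2) + s) * (s ^ m - 1)
            - 4 * (m : ℂ) * s ^ (m + 1) * (s - 1) + (s ^ (m + 1) - 1) ^ 2 * (s - 1) := by
          rw [geom]
      _ = ((∑ i ∈ range (m + 1), ((i : ℂ) + 1) ^ 2 * s ^ i)
            + s ^ (m + 1) * ∑ i ∈ range (m + 1), ((m + 1 - 1 - i : ℕ) : ℂ) ^ 2 * s ^ i)
            * (s - 1) ^ 3 := by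
          rw [add_mul, aux_A s (m + 1), mul_assoc (s ^ (m + 1)), aux_D s (m + 1)]
          push_cast
          ring
end

section
/- For positive integers m, n, the map ψ(z₁, z₂) = (z₁/z₂, z₂) is a bijection from H_{m/(n+m)} onto H_{m/n}, where H_γ = {(z₁,z₂) : |z₁|^γ < |z₂| < 1}. -/
lemma rpow_div_lt_iff (a b p q : ℝ) (ha : 0 ≤ a) (hb : 0 < b) (hq : 0 < q) :
    a ^ (p / q) < b ↔ a ^ p < b ^ q := by
  rw [← Real.rpow_lt_rpow_iff (Real.rpow_nonneg ha _) hb.le hq, ← Real.rpow_mul ha,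
    div_mul_cancel₀ _ hq.ne']

/-- For positive integers `m, n`, the map `ψ(z₁,z₂) = (z₁/z₂, z₂)` is a bijection from
`H_{m/(n+m)}` onto `H_{m/n}`, where `H_γ = {|z₁|^γ < |z₂| < 1}`. -/
theorem stmt_8 (m n : ℕ) (hm : 1 ≤ m) (hn : 1 ≤ n) :
    Set.BijOn (fun p : ℂ × ℂ => (p.1 / p.2, p.2))
      {p : ℂ × ℂ | ‖p.1‖ ^ ((m : ℝ) / (n + m)) < ‖p.2‖ ∧
        ‖p.2‖ < 1}
      {p : ℂ × ℂ | ‖p.1‖ ^ ((m : ℝ) / n) < ‖p.2‖ ∧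
        ‖p.2‖ < 1} := by
  have hn' : (0 : ℝ) < n := by exact_mod_cast hn
  have hm' : (0 : ℝ) < m := by exact_mod_cast hm
  have hnm : (0 : ℝ) < (n : ℝ) + m := by linarith
  refine ⟨?_, ?_, ?_⟩
  · rintro ⟨z₁, z₂⟩ ⟨h1, h2⟩
    simp only [Set.mem_setOf_eq] at h1 h2 ⊢
    have hb : 0 < ‖z₂‖ := lt_of_le_of_lt (Real.rpow_nonneg (norm_nonneg _) _) h1
    set a := ‖z₁‖ with ha
    set b := ‖z₂‖ with hbb
    have hbm : (0:ℝ) < b ^ (m:ℝ) := Real.rpow_pos_of_pos hb _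
    refine ⟨?_, h2⟩
    rw [norm_div, rpow_div_lt_iff _ _ _ _ (by positivity) hb hn',
      Real.div_rpow (norm_nonneg _) hb.le, div_lt_iff₀ hbm, ← Real.rpow_add hb]
    rw [rpow_div_lt_iff _ _ _ _ (norm_nonneg _) hb hnm] at h1
    exact h1
  · rintro ⟨z₁, z₂⟩ ⟨h1, h2⟩ ⟨w₁, w₂⟩ ⟨g1, g2⟩ heq
    have hb : 0 < ‖z₂‖ := lt_of_le_of_lt (Real.rpow_nonneg (norm_nonneg _) _) h1
    have hz2 : z₂ ≠ 0 := by simpa using hb.ne'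
    simp only [Prod.mk.injEq] at heq
    obtain ⟨he1, he2⟩ := heq
    subst he2
    have : z₁ = w₁ := by
      field_simp at he1
      exact he1
    simp [this]
  · rintro ⟨w₁, w₂⟩ ⟨h1, h2⟩
    simp only [Set.mem_setOf_eq] at h1 h2
    have hb : 0 < ‖w₂‖ := lt_of_le_of_lt (Real.rpow_nonneg (norm_nonneg _) _) h1
    have hw2 : w₂ ≠ 0 := by simpa using hb.ne'
    refine ⟨(w₁ * w₂, w₂), ⟨?_, h2⟩, ?_⟩
    · set a := ‖w₁‖
      set b := ‖w₂‖
      have hbm : (0:ℝ) < b ^ (m:ℝ) := Real.rpow_pos_of_pos hb _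
      show ‖w₁ * w₂‖ ^ ((m:ℝ) / (↑n + ↑m)) < b
      rw [norm_mul, rpow_div_lt_iff _ _ _ _ (by positivity) hb hnm,
        Real.mul_rpow (norm_nonneg _) hb.le, Real.rpow_add hb,
        mul_lt_mul_iff_of_pos_right hbm]
      rw [rpow_div_lt_iff _ _ _ _ (norm_nonneg _) hb hn'] at h1
      exact h1
    · simp [mul_div_assoc, div_self hw2]
end

section
/- Let k ≥ 3 be an integer and define p_k(s) = ∑_{l=1}^{k-1} l(k-l)s^{l-1} and q_k(s) = ∑_{l=1}^{k} (l² + (k-l)²s^k)s^{l-1}. Then for z = (0, i/√(k-1)) and w = (0, -i/√(k-1)), both z and w lie in H_k = {|z₁|^k < |z₂| < 1}, and with s = z₁·conj(w₁) = 0 and t = z₂·conj(w₂) = 1/(k-1), the numerator p_k(s)t² + q_k(s)t + s^k·p_k(s) of the Bergman kernel B_k(z,w) equals 0. -/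
open Complex

/-- For `k ≥ 3`, the points `z = (0, i/√(k-1))` and `w = (0, -i/√(k-1))` lie in
`H_k = {|z₁|^k < |z₂| < 1}`, and with `s = z₁·conj w₁`, `t = z₂·conj w₂`, the numerator
`p_k(s)t² + q_k(s)t + s^k·p_k(s)` of the Bergman kernel `B_k(z,w)` vanishes. -/
theorem stmt_9 (k : ℕ) (hk : 3 ≤ k) (z w : ℂ × ℂ) (s t : ℂ)
    (hz : z = (0, Complex.I / (Real.sqrt ((k : ℝ) - 1) : ℂ)))
    (hw : w = (0, -Complex.I / (Real.sqrt ((k : ℝ) - 1) : ℂ)))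
    (hs : s = z.1 * (starRingEnd ℂ) w.1)
    (ht : t = z.2 * (starRingEnd ℂ) w.2) :
    (‖z.1‖ ^ k < ‖z.2‖ ∧ ‖z.2‖ < 1) ∧
    (‖w.1‖ ^ k < ‖w.2‖ ∧ ‖w.2‖ < 1) ∧
    (∑ l ∈ Finset.Icc 1 (k - 1), (l : ℂ) * ((k - l : ℕ) : ℂ) * s ^ (l - 1)) * t ^ 2
      + (∑ l ∈ Finset.Icc 1 k, ((l : ℂ) ^ 2 + ((k - l : ℕ) : ℂ) ^ 2 * s ^ k) * s ^ (l - 1)) * t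
      + s ^ k * (∑ l ∈ Finset.Icc 1 (k - 1), (l : ℂ) * ((k - l : ℕ) : ℂ) * s ^ (l - 1))
    = 0 := by
  have hk3 : (3:ℝ) ≤ (k:ℝ) := by exact_mod_cast hk
  have hr1 : 1 < Real.sqrt ((k:ℝ) - 1) := by
    nlinarith [Real.sq_sqrt (show (0:ℝ) ≤ (k:ℝ) - 1 by linarith),
      Real.sqrt_nonneg ((k:ℝ) - 1)]
  have hr0 : (0:ℝ) < Real.sqrt ((k:ℝ) - 1) := by linarith
  have habs : ‖(Complex.I / (Real.sqrt ((k : ℝ) - 1) : ℂ))‖ = 1 / Real.sqrt ((k:ℝ) - 1) := by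
    rw [norm_div, Complex.norm_I, Complex.norm_real, Real.norm_of_nonneg hr0.le]
  have habsw : ‖(-Complex.I / (Real.sqrt ((k : ℝ) - 1) : ℂ))‖ = 1 / Real.sqrt ((k:ℝ) - 1) := by
    rw [neg_div, norm_neg, habs]
  have hs0 : s = 0 := by simp [hs, hz]
  have hsq : ((Real.sqrt ((k:ℝ) - 1) : ℂ)) * ((Real.sqrt ((k:ℝ) - 1)) : ℂ) = ((k:ℂ) - 1) := by
    rw [← Complex.ofReal_mul, Real.mul_self_sqrt (by linarith)]
    push_cast; ring
  have ht0 : t = -(1 / (((k:ℂ) - 1))) := by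
    rw [ht, hz, hw]
    simp only [map_div₀, map_neg, Complex.conj_I, Complex.conj_ofReal, neg_neg]
    rw [div_mul_div_comm, Complex.I_mul_I, hsq, neg_div]
  have hkne : ((k:ℂ) - 1) ≠ 0 := by
    have h1 : (k:ℂ) ≠ 1 := by
      have : k ≠ 1 := by omega
      exact_mod_cast fun h => this (by exact_mod_cast h)
    intro h; exact h1 (sub_eq_zero.mp h)
  have h2 : (0:ℝ) < 1 / Real.sqrt ((k:ℝ) - 1) := by positivity
  have h3 : 1 / Real.sqrt ((k:ℝ) - 1) < 1 := by rw [div_lt_one hr0]; exact hr1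
  refine ⟨⟨?_, ?_⟩, ⟨?_, ?_⟩, ?_⟩
  · rw [hz]; simpa [zero_pow (show k ≠ 0 by omega), habs, abs_of_pos hr0, hr0.ne'] using h2
  · rw [hz]; simpa [habs, abs_of_pos hr0] using h3
  · rw [hw]; simpa [zero_pow (show k ≠ 0 by omega), habsw, abs_of_pos hr0, hr0.ne'] using h2
  · rw [hw]; simpa [habsw, abs_of_pos hr0] using h3
  · subst hs0
    have hsum1 : (∑ l ∈ Finset.Icc 1 (k - 1), (l : ℂ) * ((k - l : ℕ) : ℂ) * (0:ℂ) ^ (l - 1)) = (k - 1 : ℕ) := by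
      rw [Finset.sum_eq_single 1]
      · simp
      · intro b hb hb1
        rw [Finset.mem_Icc] at hb
        rw [zero_pow (by omega : b - 1 ≠ 0)]; ring
      · intro h
        exact absurd (Finset.mem_Icc.mpr ⟨le_refl 1, by omega⟩) h
    have hsum2 : (∑ l ∈ Finset.Icc 1 k, ((l : ℂ) ^ 2 + ((k - l : ℕ) : ℂ) ^ 2 * (0:ℂ) ^ k) * (0:ℂ) ^ (l - 1)) = 1 := by
      rw [Finset.sum_eq_single 1]
      · simp [zero_pow (show k ≠ 0 by omega)]
      · intro b hb hb1
        rw [Finset.mem_Icc] at hb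
        rw [zero_pow (by omega : b - 1 ≠ 0)]; ring
      · intro h
        exact absurd (Finset.mem_Icc.mpr ⟨le_refl 1, by omega⟩) h
    rw [hsum1, hsum2, ht0, zero_pow (show k ≠ 0 by omega)]
    have hck : ((k - 1 : ℕ) : ℂ) = (k:ℂ) - 1 := by
      push_cast [Nat.cast_sub (by omega : 1 ≤ k)]; ring
    rw [hck]
    field_simp
    ring
end

section
/- Let z = (i/√2, (√7 + i)/4) and w = (-i/√2, (√7 - i)/4) in ℂ². Then z and w lie in H₂ = {|z₁|² < |z₂| < 1}, and with s = z₁·conj(w₁) and t = z₂·conj(w₂), the numerator p₂(s)t² + q₂(s)t + s²·p₂(s) of the Bergman kernel B₂(z,w) equals 0, where p₂(s) = 1 and q₂(s) = 1 + 4s + s². -/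
/-- The points `z = (i/√2, (√7+i)/4)` and `w = (-i/√2, (√7-i)/4)` lie in
`H₂ = {|z₁|² < |z₂| < 1}` and, with `s = z₁·conj w₁`, `t = z₂·conj w₂`, the numerator
`t² + (1 + 4s + s²)t + s²` of the Bergman kernel `B₂(z,w)` vanishes. -/
theorem stmt_10 (z w : ℂ × ℂ) (s t : ℂ)
    (hz : z = (Complex.I / (Real.sqrt 2 : ℂ), ((Real.sqrt 7 : ℂ) + Complex.I) / 4))
    (hw : w = (-Complex.I / (Real.sqrt 2 : ℂ), ((Real.sqrt 7 : ℂ) - Complex.I) / 4))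
    (hs : s = z.1 * (starRingEnd ℂ) w.1)
    (ht : t = z.2 * (starRingEnd ℂ) w.2) :
    (‖z.1‖ ^ 2 < ‖z.2‖ ∧ ‖z.2‖ < 1) ∧
    (‖w.1‖ ^ 2 < ‖w.2‖ ∧ ‖w.2‖ < 1) ∧
    1 * t ^ 2 + (1 + 4 * s + s ^ 2) * t + s ^ 2 * 1 = 0 := by
  have s2 : Real.sqrt 2 ^ 2 = 2 := Real.sq_sqrt (by norm_num)
  have s7 : Real.sqrt 7 ^ 2 = 7 := Real.sq_sqrt (by norm_num)
  have h2pos : (0:ℝ) < Real.sqrt 2 := Real.sqrt_pos.2 (by norm_num)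
  have h2ne : ((Real.sqrt 2 : ℝ) : ℂ) ≠ 0 := by exact_mod_cast h2pos.ne'
  have c2 : ((Real.sqrt 2 : ℝ) : ℂ) ^ 2 = 2 := by exact_mod_cast congrArg (Complex.ofReal) s2
  have c7 : ((Real.sqrt 7 : ℝ) : ℂ) ^ 2 = 7 := by exact_mod_cast congrArg (Complex.ofReal) s7
  have habs1 : ‖z.1‖ ^ 2 = 1/2 := by
    rw [hz]
    rw [Complex.sq_norm, Complex.normSq_div, Complex.normSq_I]
    simp [Complex.normSq_ofReal]
  have habs2 : ‖z.2‖ ^ 2 = 1/2 := by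
    rw [hz, Complex.sq_norm]
    simp [Complex.normSq_apply, Complex.div_re, Complex.div_im]
    norm_num
  have habsw1 : ‖w.1‖ ^ 2 = 1/2 := by
    rw [hw, Complex.sq_norm]
    rw [Complex.normSq_div]
    simp [Complex.normSq_ofReal]
  have habsw2 : ‖w.2‖ ^ 2 = 1/2 := by
    rw [hw, Complex.sq_norm]
    simp [Complex.normSq_apply, Complex.div_re, Complex.div_im]
    norm_num
  have key : ∀ a : ℝ, 0 ≤ a → a ^ 2 = 1/2 → 1/2 < a ∧ a < 1 := by
    intro a ha h
    constructor
    · nlinarith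
    · nlinarith
  obtain ⟨hlt, hlt1⟩ := key _ (norm_nonneg z.2) habs2
  obtain ⟨hltw, hltw1⟩ := key _ (norm_nonneg w.2) habsw2
  refine ⟨⟨by rw [habs1]; exact hlt, hlt1⟩, ⟨by rw [habsw1]; exact hltw, hltw1⟩, ?_⟩
  have hsval : s = -(1/2) := by
    rw [hs, hz, hw]
    simp only [map_div₀, map_neg, Complex.conj_I, Complex.conj_ofReal]
    field_simp
    linear_combination (2:ℂ)*Complex.I_sq + c2
  have htval : t = (3 + (Real.sqrt 7 : ℂ) * Complex.I) / 8 := by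
    rw [ht, hz, hw]
    simp only [map_div₀, map_sub, Complex.conj_I, Complex.conj_ofReal, map_ofNat]
    field_simp
    linear_combination (8:ℂ)*c7 + (8:ℂ)*Complex.I_sq
  rw [hsval, htval]
  field_simp
  linear_combination (4:ℂ)*Complex.I^2*c7 + (28:ℂ)*Complex.I_sq
end

section
/- For every positive integer k there exist constants c, C > 0 such that for all z = (z₁, z₂) ∈ H_k = {|z₁|^k < |z₂| < 1}: c/((1-|z₂|)²(|z₂| - |z₁|^k)²) ≤ B_k(z,z) ≤ C/((1-|z₂|)²(|z₂| - |z₁|^k)²), where B_k(z,z) = (p_k(s)t² + q_k(s)t + s^k p_k(s))/(kπ²(1-t)²(t - s^k)²) with s = |z₁|², t = |z₂|². -/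
set_option maxHeartbeats 1000000


/-- Diagonal asymptotics of the Bergman kernel of the fat Hartogs triangle `H_k`:
there are `c, C > 0` with
`c/((1-|z₂|)²(|z₂|-|z₁|^k)²) ≤ B_k(z,z) ≤ C/((1-|z₂|)²(|z₂|-|z₁|^k)²)` on `H_k`,
where `B_k(z,z) = (p_k(s)t² + q_k(s)t + s^k p_k(s))/(kπ²(1-t)²(t-s^k)²)` with
`s = |z₁|²`, `t = |z₂|²`. -/
theorem stmt_14 (k : ℕ) (hk : 1 ≤ k) :
    ∃ c C : ℝ, 0 < c ∧ 0 < C ∧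
      ∀ z₁ z₂ : ℂ, ‖z₁‖ ^ k < ‖z₂‖ → ‖z₂‖ < 1 →
        c / ((1 - ‖z₂‖) ^ 2 * (‖z₂‖ - ‖z₁‖ ^ k) ^ 2) ≤
          ((∑ l ∈ Finset.Icc 1 (k - 1),
                (l : ℝ) * ((k - l : ℕ) : ℝ) * (‖z₁‖ ^ 2) ^ (l - 1)) *
              (‖z₂‖ ^ 2) ^ 2
            + (∑ l ∈ Finset.Icc 1 k,
                ((l : ℝ) ^ 2 + ((k - l : ℕ) : ℝ) ^ 2 * (‖z₁‖ ^ 2) ^ k) *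
                  (‖z₁‖ ^ 2) ^ (l - 1)) * ‖z₂‖ ^ 2
            + (‖z₁‖ ^ 2) ^ k *
              (∑ l ∈ Finset.Icc 1 (k - 1),
                (l : ℝ) * ((k - l : ℕ) : ℝ) * (‖z₁‖ ^ 2) ^ (l - 1))) /
          (k * Real.pi ^ 2 * (1 - ‖z₂‖ ^ 2) ^ 2 *
            (‖z₂‖ ^ 2 - (‖z₁‖ ^ 2) ^ k) ^ 2) ∧
        ((∑ l ∈ Finset.Icc 1 (k - 1),
                (l : ℝ) * ((k - l : ℕ) : ℝ) * (‖z₁‖ ^ 2) ^ (l - 1)) *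
              (‖z₂‖ ^ 2) ^ 2
            + (∑ l ∈ Finset.Icc 1 k,
                ((l : ℝ) ^ 2 + ((k - l : ℕ) : ℝ) ^ 2 * (‖z₁‖ ^ 2) ^ k) *
                  (‖z₁‖ ^ 2) ^ (l - 1)) * ‖z₂‖ ^ 2
            + (‖z₁‖ ^ 2) ^ k *
              (∑ l ∈ Finset.Icc 1 (k - 1),
                (l : ℝ) * ((k - l : ℕ) : ℝ) * (‖z₁‖ ^ 2) ^ (l - 1))) /
          (k * Real.pi ^ 2 * (1 - ‖z₂‖ ^ 2) ^ 2 *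
            (‖z₂‖ ^ 2 - (‖z₁‖ ^ 2) ^ k) ^ 2)
          ≤ C / ((1 - ‖z₂‖) ^ 2 * (‖z₂‖ - ‖z₁‖ ^ k) ^ 2) := by
  have hk0 : (0:ℝ) < k := by exact_mod_cast hk
  have hk1 : (1:ℝ) ≤ k := by exact_mod_cast hk
  have hπ : (0:ℝ) < Real.pi := Real.pi_pos
  refine ⟨1/(16*k*Real.pi^2), 4*k^3/Real.pi^2, by positivity, by positivity, ?_⟩
  intro z₁ z₂ hbk ha1
  set a := ‖z₂‖ with ha_def
  set b := ‖z₁‖ with hb_def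
  have hb0 : (0:ℝ) ≤ b := norm_nonneg _
  have hbk0 : (0:ℝ) ≤ b ^ k := pow_nonneg hb0 k
  have ha0 : (0:ℝ) < a := lt_of_le_of_lt hbk0 hbk
  have hb1 : b < 1 := by
    by_contra h
    push_neg at h
    have : (1:ℝ) ≤ b ^ k := one_le_pow₀ h
    linarith
  set s := b ^ 2 with hs_def
  set t := a ^ 2 with ht_def
  have hs0 : (0:ℝ) ≤ s := by positivity
  have hs1 : s < 1 := by nlinarith
  have ht0 : (0:ℝ) < t := by positivity
  have ht1 : t < 1 := by nlinarith
  have hsk_eq : s ^ k = (b ^ k) ^ 2 := by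
    rw [hs_def, ← pow_mul, ← pow_mul, Nat.mul_comm]
  have hsk0 : (0:ℝ) ≤ s ^ k := pow_nonneg hs0 k
  have hskt : s ^ k < t := by
    rw [hsk_eq, ht_def]; nlinarith
  have h1a : (0:ℝ) < 1 - a := by linarith
  have hab : (0:ℝ) < a - b ^ k := by linarith
  have h1t : (0:ℝ) < 1 - t := by linarith
  have hts : (0:ℝ) < t - s ^ k := by linarith
  set P := ∑ l ∈ Finset.Icc 1 (k - 1), (l : ℝ) * ((k - l : ℕ) : ℝ) * s ^ (l - 1) with hP_def
  set Q := ∑ l ∈ Finset.Icc 1 k, ((l : ℝ) ^ 2 + ((k - l : ℕ) : ℝ) ^ 2 * s ^ k) * s ^ (l - 1)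
    with hQ_def
  have hP0 : 0 ≤ P := Finset.sum_nonneg fun l _ => by positivity
  have hPk : P ≤ (k:ℝ)^3 := by
    calc P ≤ ∑ l ∈ Finset.Icc 1 (k - 1), (k:ℝ)^2 := by
            refine Finset.sum_le_sum fun l hl => ?_
            have hl' := Finset.mem_Icc.mp hl
            have hl1 : (l:ℝ) ≤ k := by
              exact_mod_cast le_trans hl'.2 (Nat.sub_le k 1)
            have hl2 : ((k - l : ℕ) : ℝ) ≤ k := by exact_mod_cast Nat.sub_le k l
            have hl3 : s ^ (l - 1) ≤ 1 := pow_le_one₀ hs0 hs1.le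
            have hl4 : (0:ℝ) ≤ s ^ (l - 1) := pow_nonneg hs0 _
            have hl5 : (0:ℝ) ≤ (l:ℝ) := Nat.cast_nonneg l
            have hl6 : (0:ℝ) ≤ ((k - l : ℕ) : ℝ) := Nat.cast_nonneg _
            have hm : (l:ℝ) * ((k - l : ℕ) : ℝ) ≤ (k:ℝ) * (k:ℝ) :=
              mul_le_mul hl1 hl2 hl6 (Nat.cast_nonneg k)
            have hp : (0:ℝ) ≤ (l:ℝ) * ((k - l : ℕ) : ℝ) * (1 - s ^ (l - 1)) :=
              mul_nonneg (mul_nonneg hl5 hl6) (by linarith)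
            nlinarith [hm, hp]
      _ ≤ (k:ℝ)^3 := by
            rw [Finset.sum_const, Nat.card_Icc, nsmul_eq_mul]
            have hcast : ((k - 1 + 1 - 1 : ℕ) : ℝ) ≤ (k:ℝ) := by
              exact_mod_cast (by omega : k - 1 + 1 - 1 ≤ k)
            have h2 : (0:ℝ) ≤ (k:ℝ)^2 := by positivity
            nlinarith [mul_le_mul_of_nonneg_right hcast h2]
  have hQ1 : 1 ≤ Q := by
    have hmem : 1 ∈ Finset.Icc 1 k := Finset.mem_Icc.mpr ⟨le_refl 1, hk⟩
    have h := Finset.single_le_sum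
      (f := fun l : ℕ => ((l : ℝ) ^ 2 + ((k - l : ℕ) : ℝ) ^ 2 * s ^ k) * s ^ (l - 1))
      (fun i _ => by positivity) hmem
    simp only [Nat.cast_one, one_pow, Nat.sub_self, pow_zero, mul_one] at h
    have : (0:ℝ) ≤ ((k - 1 : ℕ) : ℝ) ^ 2 * s ^ k := by positivity
    rw [hQ_def]; linarith [h]
  have hQk : Q ≤ 2*(k:ℝ)^3 := by
    calc Q ≤ ∑ l ∈ Finset.Icc 1 k, 2*(k:ℝ)^2 := by
            refine Finset.sum_le_sum fun l hl => ?_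
            have hl' := Finset.mem_Icc.mp hl
            have hl1 : (l:ℝ) ≤ k := by exact_mod_cast hl'.2
            have hl2 : ((k - l : ℕ) : ℝ) ≤ k := by exact_mod_cast Nat.sub_le k l
            have hl3 : s ^ (l - 1) ≤ 1 := pow_le_one₀ hs0 hs1.le
            have hl4 : (0:ℝ) ≤ s ^ (l - 1) := pow_nonneg hs0 _
            have hl5 : (0:ℝ) ≤ (l:ℝ) := Nat.cast_nonneg l
            have hl6 : (0:ℝ) ≤ ((k - l : ℕ) : ℝ) := Nat.cast_nonneg _
            have hl7 : s ^ k ≤ 1 := pow_le_one₀ hs0 hs1.le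
            have hm1 : (l:ℝ)^2 ≤ (k:ℝ)^2 := by nlinarith
            have hm2 : ((k - l : ℕ) : ℝ)^2 * s ^ k ≤ (k:ℝ)^2 := by nlinarith
            have hsum : (l:ℝ)^2 + ((k - l : ℕ) : ℝ)^2 * s ^ k ≤ 2*(k:ℝ)^2 := by linarith
            have hnn : (0:ℝ) ≤ (l:ℝ)^2 + ((k - l : ℕ) : ℝ)^2 * s ^ k := by positivity
            nlinarith [mul_nonneg hnn (by linarith : (0:ℝ) ≤ 1 - s ^ (l - 1)),
              mul_le_mul_of_nonneg_right hsum hl4]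
      _ ≤ 2*(k:ℝ)^3 := by
            rw [Finset.sum_const, Nat.card_Icc, nsmul_eq_mul]
            have hcast : ((k + 1 - 1 : ℕ) : ℝ) ≤ (k:ℝ) := by
              exact_mod_cast (by omega : k + 1 - 1 ≤ k)
            nlinarith
  set N := P * t ^ 2 + Q * t + s ^ k * P with hN_def
  clear_value a b s t P Q N
  have hN_lo : t ≤ N := by
    have h1 : 0 ≤ P * t ^ 2 := mul_nonneg hP0 (sq_nonneg t)
    have h2 : 0 ≤ s ^ k * P := mul_nonneg hsk0 hP0
    linarith [mul_le_mul_of_nonneg_right hQ1 ht0.le]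
  have hN_hi : N ≤ 4*(k:ℝ)^3*t := by
    have h1 : P * t ^ 2 ≤ (k:ℝ)^3 * t := by
      linarith [mul_nonneg (sub_nonneg.mpr hPk) (sq_nonneg t),
        mul_nonneg (mul_nonneg (pow_nonneg hk0.le 3) ht0.le) (by linarith : (0:ℝ) ≤ 1 - t)]
    have h2 : Q * t ≤ 2*(k:ℝ)^3 * t := by
      linarith [mul_nonneg (sub_nonneg.mpr hQk) ht0.le]
    have h3 : s ^ k * P ≤ (k:ℝ)^3 * t := by
      linarith [mul_nonneg (sub_nonneg.mpr hPk) hsk0,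
        mul_nonneg (pow_nonneg hk0.le 3) (by linarith : (0:ℝ) ≤ t - s ^ k)]
    linarith
  have hD : (0:ℝ) < (1 - a) ^ 2 * (a - b ^ k) ^ 2 :=
    mul_pos (pow_pos h1a 2) (pow_pos hab 2)
  have hDen : (0:ℝ) < (k:ℝ) * Real.pi ^ 2 * (1 - t) ^ 2 * (t - s ^ k) ^ 2 :=
    mul_pos (mul_pos (mul_pos hk0 (pow_pos hπ 2)) (pow_pos h1t 2)) (pow_pos hts 2)
  have f1 : 1 - t ≤ 2 * (1 - a) := by
    rw [ht_def]; linarith [sq_nonneg (1 - a)]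
  have f2 : t - s ^ k ≤ 2 * a * (a - b ^ k) := by
    rw [hsk_eq, ht_def]; linarith [sq_nonneg (a - b ^ k)]
  have f1' : 1 - a ≤ 1 - t := by
    rw [ht_def]; linarith [mul_nonneg ha0.le h1a.le]
  have f2' : a * (a - b ^ k) ≤ t - s ^ k := by
    rw [hsk_eq, ht_def]; linarith [mul_nonneg hbk0 hab.le]
  have e1 : (1 - t) ^ 2 ≤ 4 * (1 - a) ^ 2 := by
    linarith [mul_nonneg (by linarith : (0:ℝ) ≤ 2*(1-a) - (1-t))
      (by linarith : (0:ℝ) ≤ 2*(1-a) + (1-t))]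
  have e2 : (t - s ^ k) ^ 2 ≤ 4 * t * (a - b ^ k) ^ 2 := by
    have h := pow_le_pow_left₀ hts.le f2 2
    calc (t - s ^ k) ^ 2 ≤ (2 * a * (a - b ^ k)) ^ 2 := h
      _ = 4 * t * (a - b ^ k) ^ 2 := by rw [ht_def]; ring
  have e1' : (1 - a) ^ 2 ≤ (1 - t) ^ 2 := pow_le_pow_left₀ h1a.le f1' 2
  have e2' : t * (a - b ^ k) ^ 2 ≤ (t - s ^ k) ^ 2 := by
    have h := pow_le_pow_left₀ (by positivity) f2' 2
    calc t * (a - b ^ k) ^ 2 = (a * (a - b ^ k)) ^ 2 := by rw [ht_def]; ring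
      _ ≤ (t - s ^ k) ^ 2 := h
  constructor
  · rw [div_le_div_iff₀ hD hDen]
    have hkne : (k:ℝ) ≠ 0 := ne_of_gt hk0
    have hπne : Real.pi ≠ 0 := ne_of_gt hπ
    calc 1/(16*(k:ℝ)*Real.pi^2) * ((k:ℝ) * Real.pi ^ 2 * (1 - t) ^ 2 * (t - s ^ k) ^ 2)
        = ((1 - t) ^ 2 * (t - s ^ k) ^ 2) / 16 := by field_simp
      _ ≤ ((4 * (1 - a) ^ 2) * (4 * t * (a - b ^ k) ^ 2)) / 16 := by
          have h := mul_le_mul e1 e2 (sq_nonneg _) (by positivity)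
          linarith
      _ = t * ((1 - a) ^ 2 * (a - b ^ k) ^ 2) := by ring
      _ ≤ N * ((1 - a) ^ 2 * (a - b ^ k) ^ 2) := mul_le_mul_of_nonneg_right hN_lo hD.le
  · rw [div_le_div_iff₀ hDen hD]
    have hkne : (k:ℝ) ≠ 0 := ne_of_gt hk0
    have hπne : Real.pi ≠ 0 := ne_of_gt hπ
    calc N * ((1 - a) ^ 2 * (a - b ^ k) ^ 2)
        ≤ (4*(k:ℝ)^3*t) * ((1 - a) ^ 2 * (a - b ^ k) ^ 2) :=
          mul_le_mul_of_nonneg_right hN_hi hD.le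
      _ = 4*(k:ℝ)^3 * ((1 - a) ^ 2 * (t * (a - b ^ k) ^ 2)) := by ring
      _ ≤ 4*(k:ℝ)^3 * ((1 - t) ^ 2 * (t - s ^ k) ^ 2) := by
          have h := mul_le_mul e1' e2' (by positivity) (sq_nonneg _)
          have hc : (0:ℝ) ≤ 4*(k:ℝ)^3 := by positivity
          exact mul_le_mul_of_nonneg_left h hc
      _ ≤ 4*(k:ℝ)^4 * ((1 - t) ^ 2 * (t - s ^ k) ^ 2) := by
          have hY : (0:ℝ) ≤ (1 - t) ^ 2 * (t - s ^ k) ^ 2 :=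
            mul_nonneg (sq_nonneg _) (sq_nonneg _)
          have h : (0:ℝ) ≤ 4*(k:ℝ)^3 * (((k:ℝ) - 1) * ((1 - t) ^ 2 * (t - s ^ k) ^ 2)) :=
            mul_nonneg (by positivity) (mul_nonneg (by linarith) hY)
          linarith [h]
      _ = 4*(k:ℝ)^3/Real.pi^2 * ((k:ℝ) * Real.pi ^ 2 * (1 - t) ^ 2 * (t - s ^ k) ^ 2) := by
          field_simp
end
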